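/- Let P be a dynamic path instance with n ≥ 1. If w_0 ≥ 1, then x ↦ Θ_L(P,x) is strictly increasing on [x_0, x_n]; if w_n ≥ 1, then x ↦ Θ_R(P,x) is strictly decreasing on [x_0, x_n]. -/

import Mathlib

/-- A dynamic path instance: `n+1` vertices at strictly increasing coordinates
`x 0 < x 1 < ⋯ < x n`, natural-number weights `w i`, positive integer capacities
`c j` (capacity of the edge from `x (j-1)` to `x j`, for `1 ≤ j ≤ n`), and a
positive travel time `τ` per unit distance. -/
structure DPath where
  n : ℕ
  x : ℕ → ℝ
  w : ℕ → ℕ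
  c : ℕ → ℕ
  τ : ℝ
  hx : ∀ i, i < n → x i < x (i + 1)
  hc : ∀ j, 1 ≤ j → j ≤ n → 0 < c j
  hτ : 0 < τ

/-- `P.W a i = w_a + ⋯ + w_i`. -/
def DPath.W (P : DPath) (a i : ℕ) : ℕ := ∑ j ∈ Finset.Icc a i, P.w j

/-- For a sink at `y` in subpath `P_{a,b}`: the minimum capacity
`min_{i+1 ≤ j ≤ k+1} c_j`, where `k` is the index with `x_k < y ≤ x_{k+1}`;
the edges `j` with `i+1 ≤ j ≤ k+1` are exactly those with `i+1 ≤ j ≤ b` and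
`x (j-1) < y`. -/
noncomputable def DPath.cL (P : DPath) (b : ℕ) (y : ℝ) (i : ℕ) : ℕ :=
  sInf (P.c '' {j | i + 1 ≤ j ∧ j ≤ b ∧ P.x (j - 1) < y})

/-- For a sink at `y` in subpath `P_{a,b}`: the minimum capacity
`min_{k+1 ≤ j ≤ i} c_j`, where `k` is the index with `x_k ≤ y < x_{k+1}`;
the edges `j` with `k+1 ≤ j ≤ i` are exactly those with `a+1 ≤ j ≤ i` and
`y < x j`. -/
noncomputable def DPath.cR (P : DPath) (a : ℕ) (y : ℝ) (i : ℕ) : ℕ :=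
  sInf (P.c '' {j | a + 1 ≤ j ∧ j ≤ i ∧ y < P.x j})

/-- Left evacuation time `Θ_L(P_{a,b}, y)`: the maximum, over indices `i` with
`a ≤ i ≤ b`, `x i < y` and `W_{a,i} ≥ 1`, of
`(y − x_i)·τ + ⌈W_{a,i} / min_{i+1 ≤ j ≤ k+1} c_j⌉ − 1`; it is `0` if no such
index exists. -/
noncomputable def ThetaL (P : DPath) (a b : ℕ) (y : ℝ) : ℝ :=
  sSup (insert 0 {t : ℝ | ∃ i, a ≤ i ∧ i ≤ b ∧ P.x i < y ∧ 1 ≤ P.W a i ∧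
    t = (y - P.x i) * P.τ + (⌈(P.W a i : ℝ) / (P.cL b y i : ℝ)⌉ : ℝ) - 1})

/-- Right evacuation time `Θ_R(P_{a,b}, y)`. -/
noncomputable def ThetaR (P : DPath) (a b : ℕ) (y : ℝ) : ℝ :=
  sSup (insert 0 {t : ℝ | ∃ i, a ≤ i ∧ i ≤ b ∧ y < P.x i ∧ 1 ≤ P.W i b ∧
    t = (P.x i - y) * P.τ + (⌈(P.W i b : ℝ) / (P.cR a y i : ℝ)⌉ : ℝ) - 1})

/-- Evacuation time of subpath `P_{a,b}` to sink `y`. -/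
noncomputable def Theta (P : DPath) (a b : ℕ) (y : ℝ) : ℝ :=
  max (ThetaL P a b y) (ThetaR P a b y)

/-- `Θ¹(P_{a,b})`: minimum 1-sink evacuation time of subpath `P_{a,b}`
over sinks `y ∈ [x_a, x_b]`. -/
noncomputable def Theta1 (P : DPath) (a b : ℕ) : ℝ :=
  sInf (Theta P a b '' Set.Icc (P.x a) (P.x b))

/-- `Θᵏ(P_{a,b})`: minimum over all partitions of `{a, …, b}` into at most `k`
nonempty intervals `[f j, f (j+1) - 1]`, of the maximum over the intervals of
`Θ¹`. -/
noncomputable def ThetaK (P : DPath) (k a b : ℕ) : ℝ :=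
  sInf {t : ℝ | ∃ (m : ℕ) (f : ℕ → ℕ), 1 ≤ m ∧ m ≤ k ∧
    f 0 = a ∧ f m = b + 1 ∧ (∀ j, j < m → f j < f (j + 1)) ∧
    t = ⨆ j : Fin m, Theta1 P (f j.val) (f (j.val + 1) - 1)}

/-!
Moving the sink away from `x_a` (towards `x_a`) lengthens every walk counted by `Θ_L` (`Θ_R`)
and can only lower the bottleneck capacity, so every candidate time strictly grows; and since
`w_a ≥ 1` (`w_b ≥ 1`), once the sink has left `x_a` (`x_b`) there is a positive candidate,
so the trivial value `0` is overtaken as well.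
-/

theorem Set.Finite.csSup_lt_csSup_of_forall_exists_lt {α : Type*}
    [ConditionallyCompleteLinearOrder α] {s t : Set α} (hs : s.Finite) (hs' : s.Nonempty)
    (ht : t.Finite) (h : ∀ a ∈ s, ∃ b ∈ t, a < b) : sSup s < sSup t := by
  refine (hs.csSup_lt_iff hs').2 fun a ha => ?_
  obtain ⟨b, hb, hab⟩ := h a ha
  exact hab.trans_le (le_csSup ht.bddAbove hb)

theorem one_le_ceil_div {W c : ℝ} (hW : 0 < W) (hc : 0 < c) : (1 : ℝ) ≤ ⌈W / c⌉ := by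
  exact_mod_cast Int.ceil_pos.2 (div_pos hW hc)

namespace DPath

variable (P : DPath)

noncomputable def leftTime (a b : ℕ) (y : ℝ) (i : ℕ) : ℝ :=
  (y - P.x i) * P.τ + (⌈(P.W a i : ℝ) / (P.cL b y i : ℝ)⌉ : ℝ) - 1

noncomputable def rightTime (a b : ℕ) (y : ℝ) (i : ℕ) : ℝ :=
  (P.x i - y) * P.τ + (⌈(P.W i b : ℝ) / (P.cR a y i : ℝ)⌉ : ℝ) - 1

def leftTimes (a b : ℕ) (y : ℝ) : Set ℝ :=
  {t | ∃ i, a ≤ i ∧ i ≤ b ∧ P.x i < y ∧ 1 ≤ P.W a i ∧ t = P.leftTime a b y i}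

def rightTimes (a b : ℕ) (y : ℝ) : Set ℝ :=
  {t | ∃ i, a ≤ i ∧ i ≤ b ∧ y < P.x i ∧ 1 ≤ P.W i b ∧ t = P.rightTime a b y i}

theorem thetaL_eq_sSup (a b : ℕ) (y : ℝ) :
    ThetaL P a b y = sSup (insert 0 (P.leftTimes a b y)) := rfl

theorem thetaR_eq_sSup (a b : ℕ) (y : ℝ) :
    ThetaR P a b y = sSup (insert 0 (P.rightTimes a b y)) := rfl

theorem leftTimes_finite (a b : ℕ) (y : ℝ) : (P.leftTimes a b y).Finite :=
  ((Set.finite_Iic b).image (P.leftTime a b y)).subset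
    fun _ ⟨i, _, hib, _, _, ht⟩ => ⟨i, hib, ht.symm⟩

theorem rightTimes_finite (a b : ℕ) (y : ℝ) : (P.rightTimes a b y).Finite :=
  ((Set.finite_Iic b).image (P.rightTime a b y)).subset
    fun _ ⟨i, _, hib, _, _, ht⟩ => ⟨i, hib, ht.symm⟩

variable {P}

theorem W_self (i : ℕ) : P.W i i = P.w i := by
  simp [W]

theorem cL_mem {b i : ℕ} {y : ℝ} (hib : i < b) (hy : P.x i < y) :
    P.cL b y i ∈ P.c '' {j | i + 1 ≤ j ∧ j ≤ b ∧ P.x (j - 1) < y} :=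
  Nat.sInf_mem ⟨_, ⟨i + 1, ⟨le_rfl, hib, by simpa using hy⟩, rfl⟩⟩

theorem cR_mem {a i : ℕ} {y : ℝ} (hai : a < i) (hy : y < P.x i) :
    P.cR a y i ∈ P.c '' {j | a + 1 ≤ j ∧ j ≤ i ∧ y < P.x j} :=
  Nat.sInf_mem ⟨_, ⟨i, ⟨hai, le_rfl, hy⟩, rfl⟩⟩

theorem cL_pos {b i : ℕ} {y : ℝ} (hib : i < b) (hb : b ≤ P.n) (hy : P.x i < y) :
    0 < P.cL b y i := by
  obtain ⟨j, ⟨hij, hjb, -⟩, hc⟩ := cL_mem hib hy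
  exact hc ▸ P.hc j (by omega) (hjb.trans hb)

theorem cR_pos {a i : ℕ} {y : ℝ} (hai : a < i) (hi : i ≤ P.n) (hy : y < P.x i) :
    0 < P.cR a y i := by
  obtain ⟨j, ⟨haj, hji, -⟩, hc⟩ := cR_mem hai hy
  exact hc ▸ P.hc j (by omega) (hji.trans hi)

theorem cL_antitone {b i : ℕ} {y₁ y₂ : ℝ} (hy : y₁ ≤ y₂) (hib : i < b) (hy₁ : P.x i < y₁) :
    P.cL b y₂ i ≤ P.cL b y₁ i := by
  obtain ⟨j, ⟨hij, hjb, hj⟩, hc⟩ := cL_mem hib hy₁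
  exact Nat.sInf_le ⟨j, ⟨hij, hjb, hj.trans_le hy⟩, hc⟩

theorem cR_monotone {a i : ℕ} {y₁ y₂ : ℝ} (hy : y₁ ≤ y₂) (hai : a < i) (hy₂ : y₂ < P.x i) :
    P.cR a y₁ i ≤ P.cR a y₂ i := by
  obtain ⟨j, ⟨haj, hji, hj⟩, hc⟩ := cR_mem hai hy₂
  exact Nat.sInf_le ⟨j, ⟨haj, hji, hy.trans_lt hj⟩, hc⟩

theorem leftTime_pos {a b i : ℕ} {y : ℝ} (hib : i < b) (hb : b ≤ P.n) (hy : P.x i < y)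
    (hW : 1 ≤ P.W a i) : 0 < P.leftTime a b y i := by
  have hceil := one_le_ceil_div (W := P.W a i) (c := P.cL b y i) (by exact_mod_cast hW)
    (by exact_mod_cast cL_pos hib hb hy)
  have hdist : 0 < (y - P.x i) * P.τ := mul_pos (by linarith) P.hτ
  unfold leftTime
  linarith

theorem rightTime_pos {a b i : ℕ} {y : ℝ} (hai : a < i) (hi : i ≤ P.n) (hy : y < P.x i)
    (hW : 1 ≤ P.W i b) : 0 < P.rightTime a b y i := by
  have hceil := one_le_ceil_div (W := P.W i b) (c := P.cR a y i) (by exact_mod_cast hW)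
    (by exact_mod_cast cR_pos hai hi hy)
  have hdist : 0 < (P.x i - y) * P.τ := mul_pos (by linarith) P.hτ
  unfold rightTime
  linarith

theorem leftTime_lt_leftTime {a b i : ℕ} {y₁ y₂ : ℝ} (hib : i < b) (hb : b ≤ P.n)
    (hy₁ : P.x i < y₁) (hy : y₁ < y₂) : P.leftTime a b y₁ i < P.leftTime a b y₂ i := by
  have hc₂ : (0 : ℝ) < P.cL b y₂ i := by exact_mod_cast cL_pos hib hb (hy₁.trans hy)
  have hc : (P.cL b y₂ i : ℝ) ≤ P.cL b y₁ i := by exact_mod_cast cL_antitone hy.le hib hy₁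
  have hceil : (⌈(P.W a i : ℝ) / P.cL b y₁ i⌉ : ℝ) ≤ ⌈(P.W a i : ℝ) / P.cL b y₂ i⌉ := by
    gcongr
  have hdist : (y₁ - P.x i) * P.τ < (y₂ - P.x i) * P.τ := by gcongr; exact P.hτ
  unfold leftTime
  linarith

theorem rightTime_lt_rightTime {a b i : ℕ} {y₁ y₂ : ℝ} (hai : a < i) (hi : i ≤ P.n)
    (hy₂ : y₂ < P.x i) (hy : y₁ < y₂) : P.rightTime a b y₂ i < P.rightTime a b y₁ i := by
  have hc₁ : (0 : ℝ) < P.cR a y₁ i := by exact_mod_cast cR_pos hai hi (hy.trans hy₂)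
  have hc : (P.cR a y₁ i : ℝ) ≤ P.cR a y₂ i := by exact_mod_cast cR_monotone hy.le hai hy₂
  have hceil : (⌈(P.W i b : ℝ) / P.cR a y₂ i⌉ : ℝ) ≤ ⌈(P.W i b : ℝ) / P.cR a y₁ i⌉ := by
    gcongr
  have hdist : (P.x i - y₂) * P.τ < (P.x i - y₁) * P.τ := by gcongr; exact P.hτ
  unfold rightTime
  linarith

theorem thetaL_strictMonoOn {a b : ℕ} (hab : a ≤ b) (hb : b ≤ P.n) (hw : 1 ≤ P.w a) :
    StrictMonoOn (ThetaL P a b) (Set.Icc (P.x a) (P.x b)) := by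
  intro y₁ hy₁ y₂ hy₂ hy
  rw [thetaL_eq_sSup, thetaL_eq_sSup]
  refine ((P.leftTimes_finite a b y₁).insert 0).csSup_lt_csSup_of_forall_exists_lt
    (Set.insert_nonempty _ _) ((P.leftTimes_finite a b y₂).insert 0) ?_
  rintro t (rfl | ⟨i, hai, hib, hxi, hW, rfl⟩)
  · have hab' : a < b := hab.lt_of_ne fun h => by subst h; linarith [hy₁.1, hy₂.2]
    refine ⟨P.leftTime a b y₂ a, Or.inr ⟨a, le_rfl, hab, ?_, ?_, rfl⟩, ?_⟩
    · linarith [hy₁.1]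
    · rwa [W_self]
    · exact leftTime_pos hab' hb (by linarith [hy₁.1]) (by rwa [W_self])
  · have hib' : i < b := hib.lt_of_ne fun h => by subst h; linarith [hy₁.2]
    exact ⟨_, Or.inr ⟨i, hai, hib, hxi.trans hy, hW, rfl⟩, leftTime_lt_leftTime hib' hb hxi hy⟩

theorem thetaR_strictAntiOn {a b : ℕ} (hab : a ≤ b) (hb : b ≤ P.n) (hw : 1 ≤ P.w b) :
    StrictAntiOn (ThetaR P a b) (Set.Icc (P.x a) (P.x b)) := by
  intro y₁ hy₁ y₂ hy₂ hy
  rw [thetaR_eq_sSup, thetaR_eq_sSup]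
  refine ((P.rightTimes_finite a b y₂).insert 0).csSup_lt_csSup_of_forall_exists_lt
    (Set.insert_nonempty _ _) ((P.rightTimes_finite a b y₁).insert 0) ?_
  rintro t (rfl | ⟨i, hai, hib, hxi, hW, rfl⟩)
  · have hab' : a < b := hab.lt_of_ne fun h => by subst h; linarith [hy₁.1, hy₂.2]
    refine ⟨P.rightTime a b y₁ b, Or.inr ⟨b, hab, le_rfl, ?_, ?_, rfl⟩, ?_⟩
    · linarith [hy₂.2]
    · rwa [W_self]
    · exact rightTime_pos hab' hb (by linarith [hy₂.2]) (by rwa [W_self])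
  · have hai' : a < i := hai.lt_of_ne fun h => by subst h; linarith [hy₂.1]
    exact ⟨_, Or.inr ⟨i, hai, hib, hy.trans hxi, hW, rfl⟩,
      rightTime_lt_rightTime hai' (hib.trans hb) hxi hy⟩

end DPath

theorem stmt4_general (P : DPath) :
    (1 ≤ P.w 0 → StrictMonoOn (ThetaL P 0 P.n) (Set.Icc (P.x 0) (P.x P.n))) ∧
    (1 ≤ P.w P.n → StrictAntiOn (ThetaR P 0 P.n) (Set.Icc (P.x 0) (P.x P.n))) :=
  ⟨DPath.thetaL_strictMonoOn P.n.zero_le le_rfl, DPath.thetaR_strictAntiOn P.n.zero_le le_rfl⟩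

/-- if `w_0 ≥ 1` then `Θ_L(P,·)` is strictly increasing on
`[x_0, x_n]`; if `w_n ≥ 1` then `Θ_R(P,·)` is strictly decreasing on
`[x_0, x_n]`. -/
theorem stmt4 (P : DPath) (hn : 1 ≤ P.n) :
    (1 ≤ P.w 0 → StrictMonoOn (ThetaL P 0 P.n) (Set.Icc (P.x 0) (P.x P.n))) ∧
    (1 ≤ P.w P.n → StrictAntiOn (ThetaR P 0 P.n) (Set.Icc (P.x 0) (P.x P.n))) :=
  stmt4_general P
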